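/- Let M > 0 and let u : ℝ → ℝ be a C¹ function with compact support such that ‖u‖_{L²(ℝ)} ≤ M and ‖u'‖_{L²(ℝ)} ≤ M. Then (sup_{x ∈ ℝ} |u(x)|)³ ≤ 2√2 · M² · ‖u‖_{L²(ℝ)}. -/

import Mathlib

open MeasureTheory

/-! Writing `u x ^ 2 = ∫_{y}^{x} 2 u u'` from a point `y ≤ x` outside the support and applying
Cauchy–Schwarz gives `sup |u|² ≤ 2 ‖u‖ ‖u'‖`. Cubing, one factor `‖u‖` is kept and the rest,
`‖u‖^{1/2} ‖u'‖^{3/2}`, is at most `M²`. -/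

theorem HasCompactSupport.exists_le_apply_eq_zero {α : Type*} [Zero α] {f : ℝ → α}
    (hf : HasCompactSupport f) (x : ℝ) : ∃ y ≤ x, f y = 0 := by
  obtain ⟨b, hb⟩ := hf.isCompact.bddBelow
  refine ⟨min (b - 1) x, min_le_right _ _, image_eq_zero_of_notMem_tsupport fun hmem => ?_⟩
  linarith [hb hmem, min_le_left (b - 1) x]

theorem integral_abs_mul_le_sqrt_integral_sq_mul_sqrt_integral_sq {α : Type*}
    [MeasurableSpace α] {μ : Measure α} {f g : α → ℝ} (hf : MemLp f 2 μ) (hg : MemLp g 2 μ) :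
    ∫ a, |f a * g a| ∂μ ≤ √(∫ a, f a ^ 2 ∂μ) * √(∫ a, g a ^ 2 ∂μ) := by
  have h := integral_mul_norm_le_Lp_mul_Lq (f := f) (g := g) Real.HolderConjugate.two_two
    (by rwa [ENNReal.ofReal_ofNat]) (by rwa [ENNReal.ofReal_ofNat])
  simp only [Real.norm_eq_abs, Real.rpow_two, sq_abs, ← abs_mul] at h
  rwa [Real.sqrt_eq_rpow, Real.sqrt_eq_rpow]

theorem sq_le_two_mul_integral_abs_mul_deriv {u : ℝ → ℝ} (hu : ContDiff ℝ 1 u)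
    (hsupp : HasCompactSupport u) (x : ℝ) : u x ^ 2 ≤ 2 * ∫ t, |u t * deriv u t| := by
  obtain ⟨y, hyx, huy⟩ := hsupp.exists_le_apply_eq_zero x
  have hcont : Continuous fun t => u t * deriv u t := hu.continuous.mul hu.continuous_deriv_one
  have hderiv (t : ℝ) : HasDerivAt (fun t => u t ^ 2) (2 * (u t * deriv u t)) t :=
    ((hu.differentiable one_ne_zero).differentiableAt.hasDerivAt (x := t)).fun_pow 2
      |>.congr_deriv (by norm_num; ring)
  have hftc : ∫ t in y..x, 2 * (u t * deriv u t) = u x ^ 2 := by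
    rw [intervalIntegral.integral_eq_sub_of_hasDerivAt (fun t _ => hderiv t)
      ((continuous_const.mul hcont).intervalIntegrable _ _), huy]
    ring
  have hint : Integrable fun t => |u t * deriv u t| :=
    hcont.abs.integrable_of_hasCompactSupport (hsupp.mul_right).abs
  calc u x ^ 2 = 2 * ∫ t in y..x, u t * deriv u t := by
        rw [← hftc, intervalIntegral.integral_const_mul]
    _ ≤ 2 * ∫ t in y..x, |u t * deriv u t| := by
        gcongr
        exact (le_abs_self _).trans (intervalIntegral.abs_integral_le_integral_abs hyx)
    _ ≤ 2 * ∫ t, |u t * deriv u t| := by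
        gcongr
        rw [intervalIntegral.integral_of_le hyx]
        exact setIntegral_le_integral hint (.of_forall fun t => abs_nonneg _)

theorem iSup_abs_sq_le {ι : Sort*} {f : ι → ℝ} {c : ℝ} (hc : 0 ≤ c) (h : ∀ i, f i ^ 2 ≤ c) :
    (⨆ i, |f i|) ^ 2 ≤ c :=
  (Real.le_sqrt (Real.iSup_nonneg fun _ => abs_nonneg _) hc).mp
    (Real.iSup_le (fun i => Real.abs_le_sqrt (h i)) (Real.sqrt_nonneg c))

theorem pow_three_le_two_mul_sqrt_two_mul_sq_mul {s a b M : ℝ} (hs : 0 ≤ s) (ha : 0 ≤ a)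
    (hb : 0 ≤ b) (haM : a ≤ M) (hbM : b ≤ M) (h : s ^ 2 ≤ 2 * a * b) :
    s ^ 3 ≤ 2 * √2 * M ^ 2 * a := by
  have hM : 0 ≤ M := ha.trans haM
  rw [← pow_le_pow_iff_left₀ (by positivity) (by positivity) two_ne_zero]
  calc (s ^ 3) ^ 2 = (s ^ 2) ^ 3 := by ring
    _ ≤ (2 * a * b) ^ 3 := by gcongr
    _ = 8 * a ^ 2 * (a * b ^ 3) := by ring
    _ ≤ 8 * a ^ 2 * (M * M ^ 3) := by gcongr
    _ = (2 * √2 * M ^ 2 * a) ^ 2 := by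
        rw [mul_pow, mul_pow, mul_pow, Real.sq_sqrt zero_le_two]
        ring

theorem sup_abs_pow_three_le_general (M : ℝ) (u : ℝ → ℝ)
    (hu : ContDiff ℝ 1 u) (hsupp : HasCompactSupport u)
    (hL2 : Real.sqrt (∫ x : ℝ, (u x) ^ 2) ≤ M)
    (hL2' : Real.sqrt (∫ x : ℝ, (deriv u x) ^ 2) ≤ M) :
    (⨆ x : ℝ, |u x|) ^ 3 ≤ 2 * Real.sqrt 2 * M ^ 2 * Real.sqrt (∫ x : ℝ, (u x) ^ 2) := by
  have hCS : ∫ t, |u t * deriv u t| ≤ √(∫ x, u x ^ 2) * √(∫ x, deriv u x ^ 2) :=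
    integral_abs_mul_le_sqrt_integral_sq_mul_sqrt_integral_sq
      (hu.continuous.memLp_of_hasCompactSupport hsupp)
      (hu.continuous_deriv_one.memLp_of_hasCompactSupport hsupp.deriv)
  have hsup : (⨆ x, |u x|) ^ 2 ≤ 2 * √(∫ x, u x ^ 2) * √(∫ x, deriv u x ^ 2) := by
    refine iSup_abs_sq_le (by positivity) fun x => ?_
    rw [mul_assoc]
    exact (sq_le_two_mul_integral_abs_mul_deriv hu hsupp x).trans (by gcongr)
  exact pow_three_le_two_mul_sqrt_two_mul_sq_mul (Real.iSup_nonneg fun _ => abs_nonneg _)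
    (Real.sqrt_nonneg _) (Real.sqrt_nonneg _) hL2 hL2' hsup

/-- If `u : ℝ → ℝ` is `C¹` with compact support, `‖u‖_{L²} ≤ M` and
`‖u'‖_{L²} ≤ M`, then `(sup_x |u x|)³ ≤ 2√2 · M² · ‖u‖_{L²}`. -/
theorem sup_abs_pow_three_le (M : ℝ) (hM : 0 < M) (u : ℝ → ℝ)
    (hu : ContDiff ℝ 1 u) (hsupp : HasCompactSupport u)
    (hL2 : Real.sqrt (∫ x : ℝ, (u x) ^ 2) ≤ M)
    (hL2' : Real.sqrt (∫ x : ℝ, (deriv u x) ^ 2) ≤ M) :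
    (⨆ x : ℝ, |u x|) ^ 3 ≤ 2 * Real.sqrt 2 * M ^ 2 * Real.sqrt (∫ x : ℝ, (u x) ^ 2) :=
  sup_abs_pow_three_le_general M u hu hsupp hL2 hL2'
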